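/- For any probability vector p = (p_1,...,p_K) with K ≥ 2 and all p_k > 0, we have Σ_{k=1}^{K−1} √(1/p_k + 1/p_{k+1}) > (K−1)√(2(K−1)). -/

import Mathlib

/-!
Write `s_k = p_k + p_{k+1}` for the `n = K - 1` adjacent pairs. By AM–HM each term is at least
`2 / √s_k`, and by Cauchy–Schwarz twice `∑ 1/√s_k ≥ n² / ∑ √s_k ≥ n² / √(n ∑ s_k)`. Since
`∑ s_k = 2 - p_1 - p_K < 2`, the sum exceeds `2n² / √(2n) = n √(2n)`.
-/

open Finset Real

lemma two_div_sqrt_add_le_sqrt_inv_add_inv {a b : ℝ} (ha : 0 < a) (hb : 0 < b) :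
    2 / √(a + b) ≤ √(1 / a + 1 / b) := by
  have hamhm : 4 / (a + b) ≤ 1 / a + 1 / b := by
    rw [div_add_div _ _ ha.ne' hb.ne', div_le_div_iff₀ (by positivity) (by positivity)]
    nlinarith [sq_nonneg (a - b)]
  calc 2 / √(a + b) = √(4 / (a + b)) := by
        rw [sqrt_div' _ (by positivity), show (4 : ℝ) = 2 ^ 2 by norm_num, sqrt_sq zero_le_two]
    _ ≤ √(1 / a + 1 / b) := sqrt_le_sqrt hamhm

lemma sq_card_div_sqrt_card_mul_sum_le_sum_inv_sqrt {ι : Type*} (s : Finset ι) {f : ι → ℝ}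
    (hf : ∀ i ∈ s, 0 < f i) :
    (#s : ℝ) ^ 2 / √(#s * ∑ i ∈ s, f i) ≤ ∑ i ∈ s, 1 / √(f i) := by
  rcases s.eq_empty_or_nonempty with rfl | hs
  · simp
  have hroot : ∀ i ∈ s, 0 < √(f i) := fun i hi => sqrt_pos.mpr (hf i hi)
  have hsum_root_pos : 0 < ∑ i ∈ s, √(f i) := sum_pos hroot hs
  have hsum_root_le : ∑ i ∈ s, √(f i) ≤ √(#s * ∑ i ∈ s, f i) := by
    refine le_sqrt_of_sq_le ?_
    calc (∑ i ∈ s, √(f i)) ^ 2 ≤ #s * ∑ i ∈ s, √(f i) ^ 2 := sq_sum_le_card_mul_sum_sq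
      _ = #s * ∑ i ∈ s, f i := by
        rw [sum_congr rfl fun i hi => sq_sqrt (hf i hi).le]
  have hsedrakyan : (#s : ℝ) ^ 2 / ∑ i ∈ s, √(f i) ≤ ∑ i ∈ s, 1 / √(f i) := by
    simpa using sq_sum_div_le_sum_sq_div s (fun _ => (1 : ℝ)) hroot
  exact (div_le_div_of_nonneg_left (by positivity) hsum_root_pos hsum_root_le).trans hsedrakyan

lemma sum_castSucc_add_succ {M : Type*} [AddCommGroup M] (n : ℕ) (p : Fin (n + 1) → M) :
    ∑ k : Fin n, (p k.castSucc + p k.succ) = 2 • ∑ k, p k - p 0 - p (Fin.last n) := by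
  rw [sum_add_distrib, two_nsmul]
  nth_rw 1 [Fin.sum_univ_castSucc]
  rw [Fin.sum_univ_succ]
  abel

theorem objective_lower_bound (K : ℕ) (hK : 2 ≤ K)
    (p : Fin K → ℝ) (hp : ∀ k, 0 < p k) (hps : ∑ k, p k = 1) :
    ∑ k : Fin (K - 1),
        Real.sqrt (1 / p ⟨k.1, by have := k.isLt; omega⟩
          + 1 / p ⟨k.1 + 1, by have := k.isLt; omega⟩)
      > ((K : ℝ) - 1) * Real.sqrt (2 * ((K : ℝ) - 1)) := by
  obtain ⟨n, rfl⟩ : ∃ n, K = n + 1 := ⟨K - 1, by omega⟩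
  have hn : 0 < n := by omega
  have hn' : (0 : ℝ) < n := by exact_mod_cast hn
  set s : Fin n → ℝ := fun k => p k.castSucc + p k.succ
  have hs_pos : ∀ k, 0 < s k := fun k => add_pos (hp _) (hp _)
  have hs_lt : ∑ k, s k < 2 := by
    rw [sum_castSucc_add_succ, hps, two_nsmul]
    linarith [hp 0, hp (Fin.last n)]
  have hmean := sq_card_div_sqrt_card_mul_sum_le_sum_inv_sqrt univ fun k _ => hs_pos k
  rw [card_univ, Fintype.card_fin] at hmean
  have hns_pos : 0 < n * ∑ k, s k := mul_pos hn' (sum_pos (fun k _ => hs_pos k) ⟨⟨0, hn⟩, mem_univ _⟩)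
  have hroot_lt : √(n * ∑ k, s k) < √(2 * n) :=
    sqrt_lt_sqrt hns_pos.le (by rw [mul_comm 2]; exact mul_lt_mul_of_pos_left hs_lt hn')
  have hsqrt_sq : √(2 * n) ^ 2 = 2 * n := sq_sqrt (by positivity)
  calc ((↑(n + 1) : ℝ) - 1) * √(2 * ((↑(n + 1) : ℝ) - 1))
      = 2 * ((n : ℝ) ^ 2 / √(2 * n)) := by
        push_cast
        rw [add_sub_cancel_right, eq_comm, mul_div_assoc', div_eq_iff (by positivity)]
        linear_combination (-n : ℝ) * hsqrt_sq
    _ < 2 * ((n : ℝ) ^ 2 / √(n * ∑ k, s k)) := by gcongr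
    _ ≤ 2 * ∑ k, 1 / √(s k) := by gcongr
    _ = ∑ k : Fin n, 2 / √(s k) := by simp_rw [mul_sum, mul_one_div]
    _ ≤ _ := sum_le_sum fun k _ => two_div_sqrt_add_le_sqrt_inv_add_inv (hp _) (hp _)
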